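/- Let V = ℝ³ with its standard inner product and let M be a quadrilinear form on V satisfying M(v₁,v₂,v₃,v₄) = M(v₃,v₄,v₁,v₂) = M(v₁,v₄,v₃,v₂) = M(v₂,v₁,v₄,v₃) for all vᵢ ∈ V, and which is O(3)-invariant: M(Av₁,Av₂,Av₃,Av₄) = M(v₁,v₂,v₃,v₄) for every orthogonal map A of ℝ³. Then the following are equivalent: (a) ⟨M,S⟩ := Σ_{i,j,k,l=1}^{3} M(eᵢ,eⱼ,e_k,e_l)·S(eᵢ,eⱼ,e_k,e_l) ≥ 0 for every S ∈ C_W, where (eᵢ) is the standard basis; (b) M satisfies the elastic positivity bounds, i.e. Σ_{i,j,k,l=1}^{3} uᵢ vⱼ u_k v_l · M(eᵢ,eⱼ,e_k,e_l) ≥ 0 for all u, v ∈ ℝ³. -/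

import Mathlib

open TensorProduct

noncomputable section

/-- The space of bilinear forms on `V ⊗ V`, in which quadrilinear forms on `V` live. -/
abbrev QF (V : Type*) [AddCommGroup V] [Module ℝ V] :=
  (V ⊗[ℝ] V) →ₗ[ℝ] (V ⊗[ℝ] V) →ₗ[ℝ] ℝ

variable {V : Type*} [AddCommGroup V] [Module ℝ V]

/-- Membership in the space `W` of quadrilinear forms with the symmetries
(i) pair exchange, (ii) `τ`-invariance, (iii) `Sym²V ⟂ Λ²V`. -/
def MemW (S : QF V) : Prop :=
  (∀ v₁ v₂ v₃ v₄ : V,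
      S (v₁ ⊗ₜ[ℝ] v₂) (v₃ ⊗ₜ[ℝ] v₄) = S (v₃ ⊗ₜ[ℝ] v₄) (v₁ ⊗ₜ[ℝ] v₂)) ∧
  (∀ v₁ v₂ v₃ v₄ : V,
      S (v₁ ⊗ₜ[ℝ] v₂) (v₃ ⊗ₜ[ℝ] v₄) = S (v₁ ⊗ₜ[ℝ] v₄) (v₃ ⊗ₜ[ℝ] v₂)) ∧
  (∀ v₁ v₂ v₃ v₄ : V,
      S (v₁ ⊗ₜ[ℝ] v₂ + v₂ ⊗ₜ[ℝ] v₁) (v₃ ⊗ₜ[ℝ] v₄ - v₄ ⊗ₜ[ℝ] v₃) = 0)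

/-- Membership in the cone `C_W = {S ∈ W : S ≥ 0}`. -/
def MemCW (S : QF V) : Prop := MemW S ∧ ∀ Q : V ⊗[ℝ] V, 0 ≤ S Q Q

/-- `S` generates an extremal ray of the cone `C_W`. -/
def IsExtremalCW (S : QF V) : Prop :=
  MemCW S ∧ S ≠ 0 ∧ ∀ S₀ S₁ : QF V, MemCW S₀ → MemCW S₁ → S = S₀ + S₁ →
    (∃ a : ℝ, 0 ≤ a ∧ S₀ = a • S) ∧ (∃ b : ℝ, 0 ≤ b ∧ S₁ = b • S)

/-- The subspace `Sym²V ⊆ V ⊗ V` of symmetric 2-tensors. -/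
def Sym2T (V : Type*) [AddCommGroup V] [Module ℝ V] : Submodule ℝ (V ⊗[ℝ] V) :=
  Submodule.span ℝ {x : V ⊗[ℝ] V | ∃ u v : V, x = u ⊗ₜ[ℝ] v + v ⊗ₜ[ℝ] u}

/-- The subspace `Λ²V ⊆ V ⊗ V` of antisymmetric 2-tensors. -/
def Alt2T (V : Type*) [AddCommGroup V] [Module ℝ V] : Submodule ℝ (V ⊗[ℝ] V) :=
  Submodule.span ℝ {x : V ⊗[ℝ] V | ∃ u v : V, x = u ⊗ₜ[ℝ] v - v ⊗ₜ[ℝ] u}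

/-- The standard basis vectors of `ℝ³`. -/
def e3 (i : Fin 3) : Fin 3 → ℝ := Pi.single i 1


section StmtAux

lemma e3_apply (i j : Fin 3) : e3 i j = if j = i then 1 else 0 := by
  rw [e3, Pi.single_apply]

lemma basis_expand (w : Fin 3 → ℝ) : (∑ i, w i • e3 i) = w := by
  funext t
  simp [e3, Pi.single_apply]

lemma sum4_swap (f : Fin 3 → Fin 3 → Fin 3 → Fin 3 → ℝ) :
    (∑ i : Fin 3, ∑ j : Fin 3, ∑ k : Fin 3, ∑ l : Fin 3, f i j k l)
      = ∑ i : Fin 3, ∑ j : Fin 3, ∑ k : Fin 3, ∑ l : Fin 3, f j i l k := by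
  rw [Finset.sum_comm]
  exact Finset.sum_congr rfl fun i _ => Finset.sum_congr rfl fun j _ => Finset.sum_comm

lemma sum4_add (f g : Fin 3 → Fin 3 → Fin 3 → Fin 3 → ℝ) :
    (∑ i : Fin 3, ∑ j : Fin 3, ∑ k : Fin 3, ∑ l : Fin 3, (f i j k l + g i j k l))
      = (∑ i : Fin 3, ∑ j : Fin 3, ∑ k : Fin 3, ∑ l : Fin 3, f i j k l)
        + ∑ i : Fin 3, ∑ j : Fin 3, ∑ k : Fin 3, ∑ l : Fin 3, g i j k l := by
  simp [Finset.sum_add_distrib]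

lemma sum4_div (f : Fin 3 → Fin 3 → Fin 3 → Fin 3 → ℝ) (c : ℝ) :
    (∑ i : Fin 3, ∑ j : Fin 3, ∑ k : Fin 3, ∑ l : Fin 3, f i j k l / c)
      = (∑ i : Fin 3, ∑ j : Fin 3, ∑ k : Fin 3, ∑ l : Fin 3, f i j k l) / c := by
  simp [Finset.sum_div]

def dotL (u : Fin 3 → ℝ) : (Fin 3 → ℝ) →ₗ[ℝ] ℝ where
  toFun x := ∑ i, u i * x i
  map_add' x y := by simp [mul_add, Finset.sum_add_distrib]
  map_smul' c x := by simp [Finset.mul_sum, mul_left_comm]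

lemma dotL_e3 (u : Fin 3 → ℝ) (i : Fin 3) : dotL u (e3 i) = u i := by
  simp [dotL, e3, Pi.single_apply]

def phiL (u v : Fin 3 → ℝ) : (Fin 3 → ℝ) ⊗[ℝ] (Fin 3 → ℝ) →ₗ[ℝ] ℝ :=
  TensorProduct.lift ((LinearMap.mul ℝ ℝ).compl₁₂ (dotL u) (dotL v))

lemma phiL_tmul (u v x y : Fin 3 → ℝ) : phiL u v (x ⊗ₜ[ℝ] y) = dotL u x * dotL v y := by
  simp [phiL]

def SEl (u v : Fin 3 → ℝ) : QF (Fin 3 → ℝ) :=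
  LinearMap.mk₂ ℝ (fun P Q => (phiL u v P * phiL u v Q + phiL v u P * phiL v u Q) / 2)
    (fun P P' Q => by simp [map_add]; ring)
    (fun c P Q => by simp; ring)
    (fun P Q Q' => by simp [map_add]; ring)
    (fun c P Q => by simp; ring)

lemma SEl_apply (u v : Fin 3 → ℝ) (P Q : (Fin 3 → ℝ) ⊗[ℝ] (Fin 3 → ℝ)) :
    SEl u v P Q = (phiL u v P * phiL u v Q + phiL v u P * phiL v u Q) / 2 := rfl

lemma memCW_SEl (u v : Fin 3 → ℝ) : MemCW (SEl u v) := by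
  refine ⟨⟨fun v₁ v₂ v₃ v₄ => ?_, fun v₁ v₂ v₃ v₄ => ?_, fun v₁ v₂ v₃ v₄ => ?_⟩, fun Q => ?_⟩
  · simp only [SEl_apply, phiL_tmul]; ring
  · simp only [SEl_apply, phiL_tmul]; ring
  · simp only [map_add, map_sub, LinearMap.add_apply, LinearMap.sub_apply, SEl_apply,
      phiL_tmul]
    ring
  · rw [SEl_apply]
    have h1 := mul_self_nonneg (phiL u v Q)
    have h2 := mul_self_nonneg (phiL v u Q)
    linarith

lemma pairing_SEl (M : QF (Fin 3 → ℝ))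
    (hsym3 : ∀ v₁ v₂ v₃ v₄ : Fin 3 → ℝ,
      M (v₁ ⊗ₜ[ℝ] v₂) (v₃ ⊗ₜ[ℝ] v₄) = M (v₂ ⊗ₜ[ℝ] v₁) (v₄ ⊗ₜ[ℝ] v₃))
    (u v : Fin 3 → ℝ) :
    (∑ i : Fin 3, ∑ j : Fin 3, ∑ k : Fin 3, ∑ l : Fin 3,
        M (e3 i ⊗ₜ[ℝ] e3 j) (e3 k ⊗ₜ[ℝ] e3 l)
          * SEl u v (e3 i ⊗ₜ[ℝ] e3 j) (e3 k ⊗ₜ[ℝ] e3 l))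
      = ∑ i : Fin 3, ∑ j : Fin 3, ∑ k : Fin 3, ∑ l : Fin 3,
          u i * v j * u k * v l * M (e3 i ⊗ₜ[ℝ] e3 j) (e3 k ⊗ₜ[ℝ] e3 l) := by
  set m : Fin 3 → Fin 3 → Fin 3 → Fin 3 → ℝ :=
    fun i j k l => M (e3 i ⊗ₜ[ℝ] e3 j) (e3 k ⊗ₜ[ℝ] e3 l) with hm
  have hs : ∀ i j k l : Fin 3,
      m i j k l * SEl u v (e3 i ⊗ₜ[ℝ] e3 j) (e3 k ⊗ₜ[ℝ] e3 l)
        = (m i j k l * (u i * v j * u k * v l) + m i j k l * (v i * u j * v k * u l)) / 2 := by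
    intro i j k l
    rw [SEl_apply]
    simp only [phiL_tmul, dotL_e3]
    ring
  have hswap : ∀ i j k l : Fin 3, m i j k l = m j i l k := fun i j k l => hsym3 _ _ _ _
  calc (∑ i : Fin 3, ∑ j : Fin 3, ∑ k : Fin 3, ∑ l : Fin 3,
        m i j k l * SEl u v (e3 i ⊗ₜ[ℝ] e3 j) (e3 k ⊗ₜ[ℝ] e3 l))
      = (∑ i : Fin 3, ∑ j : Fin 3, ∑ k : Fin 3, ∑ l : Fin 3,
          (m i j k l * (u i * v j * u k * v l) + m i j k l * (v i * u j * v k * u l)) / 2) := by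
        simp only [hs]
    _ = ((∑ i : Fin 3, ∑ j : Fin 3, ∑ k : Fin 3, ∑ l : Fin 3,
          m i j k l * (u i * v j * u k * v l))
        + ∑ i : Fin 3, ∑ j : Fin 3, ∑ k : Fin 3, ∑ l : Fin 3,
          m i j k l * (v i * u j * v k * u l)) / 2 := by
        rw [sum4_div (fun i j k l => m i j k l * (u i * v j * u k * v l)
          + m i j k l * (v i * u j * v k * u l)) 2,
          sum4_add]
    _ = ∑ i : Fin 3, ∑ j : Fin 3, ∑ k : Fin 3, ∑ l : Fin 3,
          u i * v j * u k * v l * m i j k l := by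
        have hB : (∑ i : Fin 3, ∑ j : Fin 3, ∑ k : Fin 3, ∑ l : Fin 3,
            m i j k l * (v i * u j * v k * u l))
            = ∑ i : Fin 3, ∑ j : Fin 3, ∑ k : Fin 3, ∑ l : Fin 3,
              m i j k l * (u i * v j * u k * v l) := by
          calc (∑ i : Fin 3, ∑ j : Fin 3, ∑ k : Fin 3, ∑ l : Fin 3,
              m i j k l * (v i * u j * v k * u l))
              = ∑ i : Fin 3, ∑ j : Fin 3, ∑ k : Fin 3, ∑ l : Fin 3,
                m j i l k * (v i * u j * v k * u l) :=
              Finset.sum_congr rfl fun i _ => Finset.sum_congr rfl fun j _ =>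
                Finset.sum_congr rfl fun k _ => Finset.sum_congr rfl fun l _ => by
                  rw [hswap i j k l]
            _ = ∑ i : Fin 3, ∑ j : Fin 3, ∑ k : Fin 3, ∑ l : Fin 3,
                m i j k l * (v j * u i * v l * u k) :=
              sum4_swap (fun i j k l => m j i l k * (v i * u j * v k * u l))
            _ = ∑ i : Fin 3, ∑ j : Fin 3, ∑ k : Fin 3, ∑ l : Fin 3,
                m i j k l * (u i * v j * u k * v l) := by
              refine Finset.sum_congr rfl fun i _ => Finset.sum_congr rfl fun j _ =>
                Finset.sum_congr rfl fun k _ => Finset.sum_congr rfl fun l _ => by ring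
        rw [hB, add_self_div_two]
        exact Finset.sum_congr rfl fun i _ => Finset.sum_congr rfl fun j _ =>
          Finset.sum_congr rfl fun k _ => Finset.sum_congr rfl fun l _ => by ring
    _ = _ := Finset.sum_congr rfl fun i _ => Finset.sum_congr rfl fun j _ =>
          Finset.sum_congr rfl fun k _ => Finset.sum_congr rfl fun l _ => by ring

def Dm (t : Fin 3) : Matrix (Fin 3) (Fin 3) ℝ :=
  Matrix.diagonal (fun s => if s = t then -1 else 1)

lemma Dm_orth (t : Fin 3) : (Dm t).transpose * Dm t = 1 := by
  rw [Dm, Matrix.diagonal_transpose, Matrix.diagonal_mul_diagonal]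
  rw [show (fun s => (if s = t then (-1:ℝ) else 1) * (if s = t then -1 else 1)) = fun _ => (1:ℝ)
    from funext fun s => by split_ifs <;> norm_num]
  exact Matrix.diagonal_one

lemma Dm_mv (t i : Fin 3) : (Dm t).mulVec (e3 i) = (if i = t then (-1:ℝ) else 1) • e3 i := by
  rw [e3, Dm, Matrix.diagonal_mulVec_single]
  funext s
  simp [Pi.single_apply, e3]

def P01 : Matrix (Fin 3) (Fin 3) ℝ := !![0,1,0; 1,0,0; 0,0,1]
def P12 : Matrix (Fin 3) (Fin 3) ℝ := !![1,0,0; 0,0,1; 0,1,0]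
def P02 : Matrix (Fin 3) (Fin 3) ℝ := !![0,0,1; 0,1,0; 1,0,0]

lemma P01_symm : P01.transpose = P01 := by
  rw [← Matrix.ext_iff]; intro i j; fin_cases i <;> fin_cases j <;> rfl

lemma P12_symm : P12.transpose = P12 := by
  rw [← Matrix.ext_iff]; intro i j; fin_cases i <;> fin_cases j <;> rfl

lemma P02_symm : P02.transpose = P02 := by
  rw [← Matrix.ext_iff]; intro i j; fin_cases i <;> fin_cases j <;> rfl

lemma P01_orth : P01.transpose * P01 = 1 := by
  rw [P01_symm, ← Matrix.ext_iff]
  intro i j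
  fin_cases i <;> fin_cases j <;>
    simp [P01, Matrix.mul_apply, Fin.sum_univ_three, Matrix.one_apply]

lemma P12_orth : P12.transpose * P12 = 1 := by
  rw [P12_symm, ← Matrix.ext_iff]
  intro i j
  fin_cases i <;> fin_cases j <;>
    simp [P12, Matrix.mul_apply, Fin.sum_univ_three, Matrix.one_apply]

lemma P02_orth : P02.transpose * P02 = 1 := by
  rw [P02_symm, ← Matrix.ext_iff]
  intro i j
  fin_cases i <;> fin_cases j <;>
    simp [P02, Matrix.mul_apply, Fin.sum_univ_three, Matrix.one_apply]

lemma P01_mv (i : Fin 3) : P01.mulVec (e3 i) = e3 (![1,0,2] i) := by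
  fin_cases i <;> (funext s; fin_cases s <;>
    simp [Matrix.mulVec, dotProduct, Fin.sum_univ_three, P01, e3, Pi.single_apply])

lemma P12_mv (i : Fin 3) : P12.mulVec (e3 i) = e3 (![0,2,1] i) := by
  fin_cases i <;> (funext s; fin_cases s <;>
    simp [Matrix.mulVec, dotProduct, Fin.sum_univ_three, P12, e3, Pi.single_apply])

lemma P02_mv (i : Fin 3) : P02.mulVec (e3 i) = e3 (![2,1,0] i) := by
  fin_cases i <;> (funext s; fin_cases s <;>
    simp [Matrix.mulVec, dotProduct, Fin.sum_univ_three, P02, e3, Pi.single_apply])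

def R35 : Matrix (Fin 3) (Fin 3) ℝ := !![3/5, -4/5, 0; 4/5, 3/5, 0; 0,0,1]

lemma R35_T : R35.transpose = !![3/5, 4/5, 0; -4/5, 3/5, 0; 0,0,1] := by
  rw [← Matrix.ext_iff]; intro i j; fin_cases i <;> fin_cases j <;> rfl

lemma R35_orth : R35.transpose * R35 = 1 := by
  rw [R35_T, ← Matrix.ext_iff]
  intro i j
  fin_cases i <;> fin_cases j <;>
    simp [R35, Matrix.mul_apply, Fin.sum_univ_three, Matrix.one_apply] <;> norm_num

lemma R35_mv0 : R35.mulVec (e3 0) = (3/5 : ℝ) • e3 0 + (4/5 : ℝ) • e3 1 := by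
  funext s; fin_cases s <;>
    norm_num [Matrix.mulVec, dotProduct, Fin.sum_univ_three, R35, e3, Pi.single_apply]


lemma m_sign (M : QF (Fin 3 → ℝ))
    (hO : ∀ A : Matrix (Fin 3) (Fin 3) ℝ, A.transpose * A = 1 →
      ∀ v₁ v₂ v₃ v₄ : Fin 3 → ℝ,
        M (A.mulVec v₁ ⊗ₜ[ℝ] A.mulVec v₂) (A.mulVec v₃ ⊗ₜ[ℝ] A.mulVec v₄)
          = M (v₁ ⊗ₜ[ℝ] v₂) (v₃ ⊗ₜ[ℝ] v₄)) (t i j k l : Fin 3) :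
    ((if i = t then (-1:ℝ) else 1) * (if j = t then (-1:ℝ) else 1)
      * (if k = t then (-1:ℝ) else 1) * (if l = t then (-1:ℝ) else 1))
      * M (e3 i ⊗ₜ[ℝ] e3 j) (e3 k ⊗ₜ[ℝ] e3 l) = M (e3 i ⊗ₜ[ℝ] e3 j) (e3 k ⊗ₜ[ℝ] e3 l) := by
  have h := hO (Dm t) (Dm_orth t) (e3 i) (e3 j) (e3 k) (e3 l)
  simp only [Dm_mv, ← smul_tmul', tmul_smul, map_smul, LinearMap.smul_apply, smul_eq_mul,
    smul_smul] at h
  linear_combination h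

lemma mperm01 (M : QF (Fin 3 → ℝ))
    (hO : ∀ A : Matrix (Fin 3) (Fin 3) ℝ, A.transpose * A = 1 →
      ∀ v₁ v₂ v₃ v₄ : Fin 3 → ℝ,
        M (A.mulVec v₁ ⊗ₜ[ℝ] A.mulVec v₂) (A.mulVec v₃ ⊗ₜ[ℝ] A.mulVec v₄)
          = M (v₁ ⊗ₜ[ℝ] v₂) (v₃ ⊗ₜ[ℝ] v₄)) (i j k l : Fin 3) :
    M (e3 (![1,0,2] i) ⊗ₜ[ℝ] e3 (![1,0,2] j)) (e3 (![1,0,2] k) ⊗ₜ[ℝ] e3 (![1,0,2] l))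
      = M (e3 i ⊗ₜ[ℝ] e3 j) (e3 k ⊗ₜ[ℝ] e3 l) := by
  have h := hO P01 P01_orth (e3 i) (e3 j) (e3 k) (e3 l)
  simp only [P01_mv] at h
  exact h

lemma mperm12 (M : QF (Fin 3 → ℝ))
    (hO : ∀ A : Matrix (Fin 3) (Fin 3) ℝ, A.transpose * A = 1 →
      ∀ v₁ v₂ v₃ v₄ : Fin 3 → ℝ,
        M (A.mulVec v₁ ⊗ₜ[ℝ] A.mulVec v₂) (A.mulVec v₃ ⊗ₜ[ℝ] A.mulVec v₄)
          = M (v₁ ⊗ₜ[ℝ] v₂) (v₃ ⊗ₜ[ℝ] v₄)) (i j k l : Fin 3) :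
    M (e3 (![0,2,1] i) ⊗ₜ[ℝ] e3 (![0,2,1] j)) (e3 (![0,2,1] k) ⊗ₜ[ℝ] e3 (![0,2,1] l))
      = M (e3 i ⊗ₜ[ℝ] e3 j) (e3 k ⊗ₜ[ℝ] e3 l) := by
  have h := hO P12 P12_orth (e3 i) (e3 j) (e3 k) (e3 l)
  simp only [P12_mv] at h
  exact h

lemma mperm02 (M : QF (Fin 3 → ℝ))
    (hO : ∀ A : Matrix (Fin 3) (Fin 3) ℝ, A.transpose * A = 1 →
      ∀ v₁ v₂ v₃ v₄ : Fin 3 → ℝ,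
        M (A.mulVec v₁ ⊗ₜ[ℝ] A.mulVec v₂) (A.mulVec v₃ ⊗ₜ[ℝ] A.mulVec v₄)
          = M (v₁ ⊗ₜ[ℝ] v₂) (v₃ ⊗ₜ[ℝ] v₄)) (i j k l : Fin 3) :
    M (e3 (![2,1,0] i) ⊗ₜ[ℝ] e3 (![2,1,0] j)) (e3 (![2,1,0] k) ⊗ₜ[ℝ] e3 (![2,1,0] l))
      = M (e3 i ⊗ₜ[ℝ] e3 j) (e3 k ⊗ₜ[ℝ] e3 l) := by
  have h := hO P02 P02_orth (e3 i) (e3 j) (e3 k) (e3 l)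
  simp only [P02_mv] at h
  exact h

end StmtAux

set_option maxHeartbeats 2000000

/-- For an `O(3)`-invariant quadrilinear form `M` on `ℝ³` with the symmetries of `W*`,
the full positivity bounds (`⟨M, S⟩ ≥ 0` for all `S ∈ C_W`) are equivalent to the
elastic positivity bounds. -/
theorem stmt18 (M : QF (Fin 3 → ℝ))
    (hsym1 : ∀ v₁ v₂ v₃ v₄ : Fin 3 → ℝ,
      M (v₁ ⊗ₜ[ℝ] v₂) (v₃ ⊗ₜ[ℝ] v₄) = M (v₃ ⊗ₜ[ℝ] v₄) (v₁ ⊗ₜ[ℝ] v₂))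
    (hsym2 : ∀ v₁ v₂ v₃ v₄ : Fin 3 → ℝ,
      M (v₁ ⊗ₜ[ℝ] v₂) (v₃ ⊗ₜ[ℝ] v₄) = M (v₁ ⊗ₜ[ℝ] v₄) (v₃ ⊗ₜ[ℝ] v₂))
    (hsym3 : ∀ v₁ v₂ v₃ v₄ : Fin 3 → ℝ,
      M (v₁ ⊗ₜ[ℝ] v₂) (v₃ ⊗ₜ[ℝ] v₄) = M (v₂ ⊗ₜ[ℝ] v₁) (v₄ ⊗ₜ[ℝ] v₃))
    (hO : ∀ A : Matrix (Fin 3) (Fin 3) ℝ, A.transpose * A = 1 →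
      ∀ v₁ v₂ v₃ v₄ : Fin 3 → ℝ,
        M (A.mulVec v₁ ⊗ₜ[ℝ] A.mulVec v₂) (A.mulVec v₃ ⊗ₜ[ℝ] A.mulVec v₄)
          = M (v₁ ⊗ₜ[ℝ] v₂) (v₃ ⊗ₜ[ℝ] v₄)) :
    (∀ S : QF (Fin 3 → ℝ), MemCW S →
        0 ≤ ∑ i : Fin 3, ∑ j : Fin 3, ∑ k : Fin 3, ∑ l : Fin 3,
          M (e3 i ⊗ₜ[ℝ] e3 j) (e3 k ⊗ₜ[ℝ] e3 l) * S (e3 i ⊗ₜ[ℝ] e3 j) (e3 k ⊗ₜ[ℝ] e3 l))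
      ↔
    (∀ u v : Fin 3 → ℝ,
        0 ≤ ∑ i : Fin 3, ∑ j : Fin 3, ∑ k : Fin 3, ∑ l : Fin 3,
          u i * v j * u k * v l * M (e3 i ⊗ₜ[ℝ] e3 j) (e3 k ⊗ₜ[ℝ] e3 l)) := by
  constructor
  · intro h u v
    have h0 := h (SEl u v) (memCW_SEl u v)
    rw [pairing_SEl M hsym3 u v] at h0
    exact h0
  · intro helast S hS
    have z0001 : M (e3 0 ⊗ₜ[ℝ] e3 0) (e3 0 ⊗ₜ[ℝ] e3 1) = 0 := by
      have h := m_sign M hO 0 0 0 0 1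
      norm_num [Fin.ext_iff] at h
      linarith
    have z0002 : M (e3 0 ⊗ₜ[ℝ] e3 0) (e3 0 ⊗ₜ[ℝ] e3 2) = 0 := by
      have h := m_sign M hO 0 0 0 0 2
      norm_num [Fin.ext_iff] at h
      linarith
    have z0010 : M (e3 0 ⊗ₜ[ℝ] e3 0) (e3 1 ⊗ₜ[ℝ] e3 0) = 0 := by
      have h := m_sign M hO 0 0 0 1 0
      norm_num [Fin.ext_iff] at h
      linarith
    have z0012 : M (e3 0 ⊗ₜ[ℝ] e3 0) (e3 1 ⊗ₜ[ℝ] e3 2) = 0 := by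
      have h := m_sign M hO 1 0 0 1 2
      norm_num [Fin.ext_iff] at h
      linarith
    have z0020 : M (e3 0 ⊗ₜ[ℝ] e3 0) (e3 2 ⊗ₜ[ℝ] e3 0) = 0 := by
      have h := m_sign M hO 0 0 0 2 0
      norm_num [Fin.ext_iff] at h
      linarith
    have z0021 : M (e3 0 ⊗ₜ[ℝ] e3 0) (e3 2 ⊗ₜ[ℝ] e3 1) = 0 := by
      have h := m_sign M hO 1 0 0 2 1
      norm_num [Fin.ext_iff] at h
      linarith
    have z0100 : M (e3 0 ⊗ₜ[ℝ] e3 1) (e3 0 ⊗ₜ[ℝ] e3 0) = 0 := by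
      have h := m_sign M hO 0 0 1 0 0
      norm_num [Fin.ext_iff] at h
      linarith
    have z0102 : M (e3 0 ⊗ₜ[ℝ] e3 1) (e3 0 ⊗ₜ[ℝ] e3 2) = 0 := by
      have h := m_sign M hO 1 0 1 0 2
      norm_num [Fin.ext_iff] at h
      linarith
    have z0111 : M (e3 0 ⊗ₜ[ℝ] e3 1) (e3 1 ⊗ₜ[ℝ] e3 1) = 0 := by
      have h := m_sign M hO 0 0 1 1 1
      norm_num [Fin.ext_iff] at h
      linarith
    have z0112 : M (e3 0 ⊗ₜ[ℝ] e3 1) (e3 1 ⊗ₜ[ℝ] e3 2) = 0 := by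
      have h := m_sign M hO 0 0 1 1 2
      norm_num [Fin.ext_iff] at h
      linarith
    have z0120 : M (e3 0 ⊗ₜ[ℝ] e3 1) (e3 2 ⊗ₜ[ℝ] e3 0) = 0 := by
      have h := m_sign M hO 1 0 1 2 0
      norm_num [Fin.ext_iff] at h
      linarith
    have z0121 : M (e3 0 ⊗ₜ[ℝ] e3 1) (e3 2 ⊗ₜ[ℝ] e3 1) = 0 := by
      have h := m_sign M hO 0 0 1 2 1
      norm_num [Fin.ext_iff] at h
      linarith
    have z0122 : M (e3 0 ⊗ₜ[ℝ] e3 1) (e3 2 ⊗ₜ[ℝ] e3 2) = 0 := by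
      have h := m_sign M hO 0 0 1 2 2
      norm_num [Fin.ext_iff] at h
      linarith
    have z0200 : M (e3 0 ⊗ₜ[ℝ] e3 2) (e3 0 ⊗ₜ[ℝ] e3 0) = 0 := by
      have h := m_sign M hO 0 0 2 0 0
      norm_num [Fin.ext_iff] at h
      linarith
    have z0201 : M (e3 0 ⊗ₜ[ℝ] e3 2) (e3 0 ⊗ₜ[ℝ] e3 1) = 0 := by
      have h := m_sign M hO 1 0 2 0 1
      norm_num [Fin.ext_iff] at h
      linarith
    have z0210 : M (e3 0 ⊗ₜ[ℝ] e3 2) (e3 1 ⊗ₜ[ℝ] e3 0) = 0 := by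
      have h := m_sign M hO 1 0 2 1 0
      norm_num [Fin.ext_iff] at h
      linarith
    have z0211 : M (e3 0 ⊗ₜ[ℝ] e3 2) (e3 1 ⊗ₜ[ℝ] e3 1) = 0 := by
      have h := m_sign M hO 0 0 2 1 1
      norm_num [Fin.ext_iff] at h
      linarith
    have z0212 : M (e3 0 ⊗ₜ[ℝ] e3 2) (e3 1 ⊗ₜ[ℝ] e3 2) = 0 := by
      have h := m_sign M hO 0 0 2 1 2
      norm_num [Fin.ext_iff] at h
      linarith
    have z0221 : M (e3 0 ⊗ₜ[ℝ] e3 2) (e3 2 ⊗ₜ[ℝ] e3 1) = 0 := by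
      have h := m_sign M hO 0 0 2 2 1
      norm_num [Fin.ext_iff] at h
      linarith
    have z0222 : M (e3 0 ⊗ₜ[ℝ] e3 2) (e3 2 ⊗ₜ[ℝ] e3 2) = 0 := by
      have h := m_sign M hO 0 0 2 2 2
      norm_num [Fin.ext_iff] at h
      linarith
    have z1000 : M (e3 1 ⊗ₜ[ℝ] e3 0) (e3 0 ⊗ₜ[ℝ] e3 0) = 0 := by
      have h := m_sign M hO 0 1 0 0 0
      norm_num [Fin.ext_iff] at h
      linarith
    have z1002 : M (e3 1 ⊗ₜ[ℝ] e3 0) (e3 0 ⊗ₜ[ℝ] e3 2) = 0 := by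
      have h := m_sign M hO 1 1 0 0 2
      norm_num [Fin.ext_iff] at h
      linarith
    have z1011 : M (e3 1 ⊗ₜ[ℝ] e3 0) (e3 1 ⊗ₜ[ℝ] e3 1) = 0 := by
      have h := m_sign M hO 0 1 0 1 1
      norm_num [Fin.ext_iff] at h
      linarith
    have z1012 : M (e3 1 ⊗ₜ[ℝ] e3 0) (e3 1 ⊗ₜ[ℝ] e3 2) = 0 := by
      have h := m_sign M hO 0 1 0 1 2
      norm_num [Fin.ext_iff] at h
      linarith
    have z1020 : M (e3 1 ⊗ₜ[ℝ] e3 0) (e3 2 ⊗ₜ[ℝ] e3 0) = 0 := by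
      have h := m_sign M hO 1 1 0 2 0
      norm_num [Fin.ext_iff] at h
      linarith
    have z1021 : M (e3 1 ⊗ₜ[ℝ] e3 0) (e3 2 ⊗ₜ[ℝ] e3 1) = 0 := by
      have h := m_sign M hO 0 1 0 2 1
      norm_num [Fin.ext_iff] at h
      linarith
    have z1022 : M (e3 1 ⊗ₜ[ℝ] e3 0) (e3 2 ⊗ₜ[ℝ] e3 2) = 0 := by
      have h := m_sign M hO 0 1 0 2 2
      norm_num [Fin.ext_iff] at h
      linarith
    have z1101 : M (e3 1 ⊗ₜ[ℝ] e3 1) (e3 0 ⊗ₜ[ℝ] e3 1) = 0 := by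
      have h := m_sign M hO 0 1 1 0 1
      norm_num [Fin.ext_iff] at h
      linarith
    have z1102 : M (e3 1 ⊗ₜ[ℝ] e3 1) (e3 0 ⊗ₜ[ℝ] e3 2) = 0 := by
      have h := m_sign M hO 0 1 1 0 2
      norm_num [Fin.ext_iff] at h
      linarith
    have z1110 : M (e3 1 ⊗ₜ[ℝ] e3 1) (e3 1 ⊗ₜ[ℝ] e3 0) = 0 := by
      have h := m_sign M hO 0 1 1 1 0
      norm_num [Fin.ext_iff] at h
      linarith
    have z1112 : M (e3 1 ⊗ₜ[ℝ] e3 1) (e3 1 ⊗ₜ[ℝ] e3 2) = 0 := by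
      have h := m_sign M hO 1 1 1 1 2
      norm_num [Fin.ext_iff] at h
      linarith
    have z1120 : M (e3 1 ⊗ₜ[ℝ] e3 1) (e3 2 ⊗ₜ[ℝ] e3 0) = 0 := by
      have h := m_sign M hO 0 1 1 2 0
      norm_num [Fin.ext_iff] at h
      linarith
    have z1121 : M (e3 1 ⊗ₜ[ℝ] e3 1) (e3 2 ⊗ₜ[ℝ] e3 1) = 0 := by
      have h := m_sign M hO 1 1 1 2 1
      norm_num [Fin.ext_iff] at h
      linarith
    have z1200 : M (e3 1 ⊗ₜ[ℝ] e3 2) (e3 0 ⊗ₜ[ℝ] e3 0) = 0 := by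
      have h := m_sign M hO 1 1 2 0 0
      norm_num [Fin.ext_iff] at h
      linarith
    have z1201 : M (e3 1 ⊗ₜ[ℝ] e3 2) (e3 0 ⊗ₜ[ℝ] e3 1) = 0 := by
      have h := m_sign M hO 0 1 2 0 1
      norm_num [Fin.ext_iff] at h
      linarith
    have z1202 : M (e3 1 ⊗ₜ[ℝ] e3 2) (e3 0 ⊗ₜ[ℝ] e3 2) = 0 := by
      have h := m_sign M hO 0 1 2 0 2
      norm_num [Fin.ext_iff] at h
      linarith
    have z1210 : M (e3 1 ⊗ₜ[ℝ] e3 2) (e3 1 ⊗ₜ[ℝ] e3 0) = 0 := by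
      have h := m_sign M hO 0 1 2 1 0
      norm_num [Fin.ext_iff] at h
      linarith
    have z1211 : M (e3 1 ⊗ₜ[ℝ] e3 2) (e3 1 ⊗ₜ[ℝ] e3 1) = 0 := by
      have h := m_sign M hO 1 1 2 1 1
      norm_num [Fin.ext_iff] at h
      linarith
    have z1220 : M (e3 1 ⊗ₜ[ℝ] e3 2) (e3 2 ⊗ₜ[ℝ] e3 0) = 0 := by
      have h := m_sign M hO 0 1 2 2 0
      norm_num [Fin.ext_iff] at h
      linarith
    have z1222 : M (e3 1 ⊗ₜ[ℝ] e3 2) (e3 2 ⊗ₜ[ℝ] e3 2) = 0 := by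
      have h := m_sign M hO 1 1 2 2 2
      norm_num [Fin.ext_iff] at h
      linarith
    have z2000 : M (e3 2 ⊗ₜ[ℝ] e3 0) (e3 0 ⊗ₜ[ℝ] e3 0) = 0 := by
      have h := m_sign M hO 0 2 0 0 0
      norm_num [Fin.ext_iff] at h
      linarith
    have z2001 : M (e3 2 ⊗ₜ[ℝ] e3 0) (e3 0 ⊗ₜ[ℝ] e3 1) = 0 := by
      have h := m_sign M hO 1 2 0 0 1
      norm_num [Fin.ext_iff] at h
      linarith
    have z2010 : M (e3 2 ⊗ₜ[ℝ] e3 0) (e3 1 ⊗ₜ[ℝ] e3 0) = 0 := by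
      have h := m_sign M hO 1 2 0 1 0
      norm_num [Fin.ext_iff] at h
      linarith
    have z2011 : M (e3 2 ⊗ₜ[ℝ] e3 0) (e3 1 ⊗ₜ[ℝ] e3 1) = 0 := by
      have h := m_sign M hO 0 2 0 1 1
      norm_num [Fin.ext_iff] at h
      linarith
    have z2012 : M (e3 2 ⊗ₜ[ℝ] e3 0) (e3 1 ⊗ₜ[ℝ] e3 2) = 0 := by
      have h := m_sign M hO 0 2 0 1 2
      norm_num [Fin.ext_iff] at h
      linarith
    have z2021 : M (e3 2 ⊗ₜ[ℝ] e3 0) (e3 2 ⊗ₜ[ℝ] e3 1) = 0 := by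
      have h := m_sign M hO 0 2 0 2 1
      norm_num [Fin.ext_iff] at h
      linarith
    have z2022 : M (e3 2 ⊗ₜ[ℝ] e3 0) (e3 2 ⊗ₜ[ℝ] e3 2) = 0 := by
      have h := m_sign M hO 0 2 0 2 2
      norm_num [Fin.ext_iff] at h
      linarith
    have z2100 : M (e3 2 ⊗ₜ[ℝ] e3 1) (e3 0 ⊗ₜ[ℝ] e3 0) = 0 := by
      have h := m_sign M hO 1 2 1 0 0
      norm_num [Fin.ext_iff] at h
      linarith
    have z2101 : M (e3 2 ⊗ₜ[ℝ] e3 1) (e3 0 ⊗ₜ[ℝ] e3 1) = 0 := by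
      have h := m_sign M hO 0 2 1 0 1
      norm_num [Fin.ext_iff] at h
      linarith
    have z2102 : M (e3 2 ⊗ₜ[ℝ] e3 1) (e3 0 ⊗ₜ[ℝ] e3 2) = 0 := by
      have h := m_sign M hO 0 2 1 0 2
      norm_num [Fin.ext_iff] at h
      linarith
    have z2110 : M (e3 2 ⊗ₜ[ℝ] e3 1) (e3 1 ⊗ₜ[ℝ] e3 0) = 0 := by
      have h := m_sign M hO 0 2 1 1 0
      norm_num [Fin.ext_iff] at h
      linarith
    have z2111 : M (e3 2 ⊗ₜ[ℝ] e3 1) (e3 1 ⊗ₜ[ℝ] e3 1) = 0 := by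
      have h := m_sign M hO 1 2 1 1 1
      norm_num [Fin.ext_iff] at h
      linarith
    have z2120 : M (e3 2 ⊗ₜ[ℝ] e3 1) (e3 2 ⊗ₜ[ℝ] e3 0) = 0 := by
      have h := m_sign M hO 0 2 1 2 0
      norm_num [Fin.ext_iff] at h
      linarith
    have z2122 : M (e3 2 ⊗ₜ[ℝ] e3 1) (e3 2 ⊗ₜ[ℝ] e3 2) = 0 := by
      have h := m_sign M hO 1 2 1 2 2
      norm_num [Fin.ext_iff] at h
      linarith
    have z2201 : M (e3 2 ⊗ₜ[ℝ] e3 2) (e3 0 ⊗ₜ[ℝ] e3 1) = 0 := by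
      have h := m_sign M hO 0 2 2 0 1
      norm_num [Fin.ext_iff] at h
      linarith
    have z2202 : M (e3 2 ⊗ₜ[ℝ] e3 2) (e3 0 ⊗ₜ[ℝ] e3 2) = 0 := by
      have h := m_sign M hO 0 2 2 0 2
      norm_num [Fin.ext_iff] at h
      linarith
    have z2210 : M (e3 2 ⊗ₜ[ℝ] e3 2) (e3 1 ⊗ₜ[ℝ] e3 0) = 0 := by
      have h := m_sign M hO 0 2 2 1 0
      norm_num [Fin.ext_iff] at h
      linarith
    have z2212 : M (e3 2 ⊗ₜ[ℝ] e3 2) (e3 1 ⊗ₜ[ℝ] e3 2) = 0 := by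
      have h := m_sign M hO 1 2 2 1 2
      norm_num [Fin.ext_iff] at h
      linarith
    have z2220 : M (e3 2 ⊗ₜ[ℝ] e3 2) (e3 2 ⊗ₜ[ℝ] e3 0) = 0 := by
      have h := m_sign M hO 0 2 2 2 0
      norm_num [Fin.ext_iff] at h
      linarith
    have z2221 : M (e3 2 ⊗ₜ[ℝ] e3 2) (e3 2 ⊗ₜ[ℝ] e3 1) = 0 := by
      have h := m_sign M hO 1 2 2 2 1
      norm_num [Fin.ext_iff] at h
      linarith
    have hP01g := mperm01 M hO
    have hP12g := mperm12 M hO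
    have hP02g := mperm02 M hO
    have a1 : M (e3 1 ⊗ₜ[ℝ] e3 1) (e3 0 ⊗ₜ[ℝ] e3 0) = M (e3 0 ⊗ₜ[ℝ] e3 0) (e3 1 ⊗ₜ[ℝ] e3 1) := hP01g 0 0 1 1
    have a2 : M (e3 0 ⊗ₜ[ℝ] e3 0) (e3 2 ⊗ₜ[ℝ] e3 2) = M (e3 0 ⊗ₜ[ℝ] e3 0) (e3 1 ⊗ₜ[ℝ] e3 1) := hP12g 0 0 1 1
    have a3 : M (e3 2 ⊗ₜ[ℝ] e3 2) (e3 1 ⊗ₜ[ℝ] e3 1) = M (e3 0 ⊗ₜ[ℝ] e3 0) (e3 1 ⊗ₜ[ℝ] e3 1) := hP02g 0 0 1 1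
    have a4 : M (e3 1 ⊗ₜ[ℝ] e3 1) (e3 2 ⊗ₜ[ℝ] e3 2) = M (e3 1 ⊗ₜ[ℝ] e3 1) (e3 0 ⊗ₜ[ℝ] e3 0) := hP02g 1 1 0 0
    have a5 : M (e3 2 ⊗ₜ[ℝ] e3 2) (e3 0 ⊗ₜ[ℝ] e3 0) = M (e3 1 ⊗ₜ[ℝ] e3 1) (e3 0 ⊗ₜ[ℝ] e3 0) := (hP12g 2 2 0 0).symm
    have b1 : M (e3 1 ⊗ₜ[ℝ] e3 0) (e3 1 ⊗ₜ[ℝ] e3 0) = M (e3 0 ⊗ₜ[ℝ] e3 1) (e3 0 ⊗ₜ[ℝ] e3 1) := hP01g 0 1 0 1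
    have b2 : M (e3 0 ⊗ₜ[ℝ] e3 2) (e3 0 ⊗ₜ[ℝ] e3 2) = M (e3 0 ⊗ₜ[ℝ] e3 1) (e3 0 ⊗ₜ[ℝ] e3 1) := hP12g 0 1 0 1
    have b3 : M (e3 2 ⊗ₜ[ℝ] e3 0) (e3 2 ⊗ₜ[ℝ] e3 0) = M (e3 0 ⊗ₜ[ℝ] e3 2) (e3 0 ⊗ₜ[ℝ] e3 2) := hP02g 0 2 0 2
    have b4 : M (e3 1 ⊗ₜ[ℝ] e3 2) (e3 1 ⊗ₜ[ℝ] e3 2) = M (e3 1 ⊗ₜ[ℝ] e3 0) (e3 1 ⊗ₜ[ℝ] e3 0) := hP02g 1 0 1 0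
    have b5 : M (e3 2 ⊗ₜ[ℝ] e3 1) (e3 2 ⊗ₜ[ℝ] e3 1) = M (e3 1 ⊗ₜ[ℝ] e3 2) (e3 1 ⊗ₜ[ℝ] e3 2) := (hP12g 2 1 2 1).symm
    have c1 : M (e3 1 ⊗ₜ[ℝ] e3 1) (e3 1 ⊗ₜ[ℝ] e3 1) = M (e3 0 ⊗ₜ[ℝ] e3 0) (e3 0 ⊗ₜ[ℝ] e3 0) := hP01g 0 0 0 0
    have c2 : M (e3 2 ⊗ₜ[ℝ] e3 2) (e3 2 ⊗ₜ[ℝ] e3 2) = M (e3 0 ⊗ₜ[ℝ] e3 0) (e3 0 ⊗ₜ[ℝ] e3 0) := hP02g 0 0 0 0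
    have me01 : M (e3 0 ⊗ₜ[ℝ] e3 1) (e3 1 ⊗ₜ[ℝ] e3 0) = M (e3 0 ⊗ₜ[ℝ] e3 0) (e3 1 ⊗ₜ[ℝ] e3 1) := hsym2 (e3 0) (e3 1) (e3 1) (e3 0)
    have me10 : M (e3 1 ⊗ₜ[ℝ] e3 0) (e3 0 ⊗ₜ[ℝ] e3 1) = M (e3 1 ⊗ₜ[ℝ] e3 1) (e3 0 ⊗ₜ[ℝ] e3 0) := hsym2 (e3 1) (e3 0) (e3 0) (e3 1)
    have me02 : M (e3 0 ⊗ₜ[ℝ] e3 2) (e3 2 ⊗ₜ[ℝ] e3 0) = M (e3 0 ⊗ₜ[ℝ] e3 0) (e3 2 ⊗ₜ[ℝ] e3 2) := hsym2 (e3 0) (e3 2) (e3 2) (e3 0)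
    have me20 : M (e3 2 ⊗ₜ[ℝ] e3 0) (e3 0 ⊗ₜ[ℝ] e3 2) = M (e3 2 ⊗ₜ[ℝ] e3 2) (e3 0 ⊗ₜ[ℝ] e3 0) := hsym2 (e3 2) (e3 0) (e3 0) (e3 2)
    have me12 : M (e3 1 ⊗ₜ[ℝ] e3 2) (e3 2 ⊗ₜ[ℝ] e3 1) = M (e3 1 ⊗ₜ[ℝ] e3 1) (e3 2 ⊗ₜ[ℝ] e3 2) := hsym2 (e3 1) (e3 2) (e3 2) (e3 1)
    have me21 : M (e3 2 ⊗ₜ[ℝ] e3 1) (e3 1 ⊗ₜ[ℝ] e3 2) = M (e3 2 ⊗ₜ[ℝ] e3 2) (e3 1 ⊗ₜ[ℝ] e3 1) := hsym2 (e3 2) (e3 1) (e3 1) (e3 2)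
    have hrotraw := hO R35 R35_orth (e3 0) (e3 0) (e3 0) (e3 0)
    rw [R35_mv0] at hrotraw
    simp only [tmul_add, add_tmul, map_add, LinearMap.add_apply, ← smul_tmul', tmul_smul,
      map_smul, LinearMap.smul_apply, smul_eq_mul, smul_smul] at hrotraw
    simp only [z0001, z0010, z0100, z1000, z0111, z1011, z1101, z1110,
      a1, a4, a5, b1, b4, b5, c1, me01, me10] at hrotraw
    have hrot : M (e3 0 ⊗ₜ[ℝ] e3 0) (e3 0 ⊗ₜ[ℝ] e3 0) = 2 * M (e3 0 ⊗ₜ[ℝ] e3 0) (e3 1 ⊗ₜ[ℝ] e3 1) + M (e3 0 ⊗ₜ[ℝ] e3 1) (e3 0 ⊗ₜ[ℝ] e3 1) := by linarith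
    have ev00 : e3 0 0 = 1 := by norm_num [e3_apply, Fin.ext_iff]
    have ev01 : e3 0 1 = 0 := by norm_num [e3_apply, Fin.ext_iff]
    have ev02 : e3 0 2 = 0 := by norm_num [e3_apply, Fin.ext_iff]
    have ev10 : e3 1 0 = 0 := by norm_num [e3_apply, Fin.ext_iff]
    have ev11 : e3 1 1 = 1 := by norm_num [e3_apply, Fin.ext_iff]
    have ev12 : e3 1 2 = 0 := by norm_num [e3_apply, Fin.ext_iff]
    have ev20 : e3 2 0 = 0 := by norm_num [e3_apply, Fin.ext_iff]
    have ev21 : e3 2 1 = 0 := by norm_num [e3_apply, Fin.ext_iff]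
    have ev22 : e3 2 2 = 1 := by norm_num [e3_apply, Fin.ext_iff]
    have hd0 := helast (e3 0) (e3 0)
    simp only [Fin.sum_univ_three, ev00, ev01, ev02, ev10, ev11, ev12, ev20, ev21, ev22,
      zero_mul, mul_zero, one_mul, mul_one, add_zero, zero_add] at hd0
    have hd : 0 ≤ 2 * M (e3 0 ⊗ₜ[ℝ] e3 0) (e3 1 ⊗ₜ[ℝ] e3 1) + M (e3 0 ⊗ₜ[ℝ] e3 1) (e3 0 ⊗ₜ[ℝ] e3 1) := by linarith
    have hq0 := helast (e3 0) (e3 1)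
    simp only [Fin.sum_univ_three, ev00, ev01, ev02, ev10, ev11, ev12, ev20, ev21, ev22,
      zero_mul, mul_zero, one_mul, mul_one, add_zero, zero_add] at hq0
    have hq : 0 ≤ M (e3 0 ⊗ₜ[ℝ] e3 1) (e3 0 ⊗ₜ[ℝ] e3 1) := by linarith
    have ssy01 : S (e3 0 ⊗ₜ[ℝ] e3 1) (e3 1 ⊗ₜ[ℝ] e3 0) = S (e3 0 ⊗ₜ[ℝ] e3 0) (e3 1 ⊗ₜ[ℝ] e3 1) := hS.1.2.1 (e3 0) (e3 1) (e3 1) (e3 0)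
    have ssy10 : S (e3 1 ⊗ₜ[ℝ] e3 0) (e3 0 ⊗ₜ[ℝ] e3 1) = S (e3 1 ⊗ₜ[ℝ] e3 1) (e3 0 ⊗ₜ[ℝ] e3 0) := hS.1.2.1 (e3 1) (e3 0) (e3 0) (e3 1)
    have ssy02 : S (e3 0 ⊗ₜ[ℝ] e3 2) (e3 2 ⊗ₜ[ℝ] e3 0) = S (e3 0 ⊗ₜ[ℝ] e3 0) (e3 2 ⊗ₜ[ℝ] e3 2) := hS.1.2.1 (e3 0) (e3 2) (e3 2) (e3 0)
    have ssy20 : S (e3 2 ⊗ₜ[ℝ] e3 0) (e3 0 ⊗ₜ[ℝ] e3 2) = S (e3 2 ⊗ₜ[ℝ] e3 2) (e3 0 ⊗ₜ[ℝ] e3 0) := hS.1.2.1 (e3 2) (e3 0) (e3 0) (e3 2)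
    have ssy12 : S (e3 1 ⊗ₜ[ℝ] e3 2) (e3 2 ⊗ₜ[ℝ] e3 1) = S (e3 1 ⊗ₜ[ℝ] e3 1) (e3 2 ⊗ₜ[ℝ] e3 2) := hS.1.2.1 (e3 1) (e3 2) (e3 2) (e3 1)
    have ssy21 : S (e3 2 ⊗ₜ[ℝ] e3 1) (e3 1 ⊗ₜ[ℝ] e3 2) = S (e3 2 ⊗ₜ[ℝ] e3 2) (e3 1 ⊗ₜ[ℝ] e3 1) := hS.1.2.1 (e3 2) (e3 1) (e3 1) (e3 2)
    have hI := hS.2 (e3 0 ⊗ₜ[ℝ] e3 0 + e3 1 ⊗ₜ[ℝ] e3 1 + e3 2 ⊗ₜ[ℝ] e3 2)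
    simp only [map_add, LinearMap.add_apply] at hI
    have hA01 := hS.2 (e3 0 ⊗ₜ[ℝ] e3 1 - e3 1 ⊗ₜ[ℝ] e3 0)
    simp only [map_sub, LinearMap.sub_apply] at hA01
    rw [ssy01, ssy10] at hA01
    have hA02 := hS.2 (e3 0 ⊗ₜ[ℝ] e3 2 - e3 2 ⊗ₜ[ℝ] e3 0)
    simp only [map_sub, LinearMap.sub_apply] at hA02
    rw [ssy02, ssy20] at hA02
    have hA12 := hS.2 (e3 1 ⊗ₜ[ℝ] e3 2 - e3 2 ⊗ₜ[ℝ] e3 1)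
    simp only [map_sub, LinearMap.sub_apply] at hA12
    rw [ssy12, ssy21] at hA12
    simp only [Fin.sum_univ_three]
    simp only [z0001, z0002, z0010, z0012, z0020, z0021, z0100, z0102, z0111, z0112, z0120, z0121, z0122, z0200, z0201, z0210, z0211, z0212, z0221, z0222, z1000, z1002, z1011, z1012, z1020, z1021, z1022, z1101, z1102, z1110, z1112, z1120, z1121, z1200, z1201, z1202, z1210, z1211, z1220, z1222, z2000, z2001, z2010, z2011, z2012, z2021, z2022, z2100, z2101, z2102, z2110, z2111, z2120, z2122, z2201, z2202, z2210, z2212, z2220, z2221,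
      me01, me10, me02, me20, me12, me21,
      a1, a2, a3, a4, a5, b1, b2, b3, b4, b5, c1, c2, hrot]
    simp only [ssy01, ssy10, ssy02, ssy20, ssy12, ssy21]
    linarith [mul_nonneg hd hI, mul_nonneg hq hA01, mul_nonneg hq hA02, mul_nonneg hq hA12]
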